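/- Let H be a real Hilbert space, let m ≥ 1, and for each i ∈ {1,…,m} let α_i ∈ (0,1), let T_i : H → H be α_i-averaged, and let (e_{i,n})_{n∈ℕ} be a sequence in H. Set α = m·max{α_1,…,α_m}/(1+(m−1)·max{α_1,…,α_m}), let (λ_n)_{n∈ℕ} be a sequence in (0, 1/α), suppose Fix(T_1∘⋯∘T_m) ≠ ∅, suppose Σ_{n∈ℕ} λ_n(1−αλ_n) = +∞ and Σ_{n∈ℕ} λ_n‖e_{i,n}‖ < +∞ for every i, let z_0 ∈ H and define z_{n+1} = z_n + λ_n( T_1(T_2(⋯T_{m−1}(T_m z_n + e_{m,n}) + e_{m−1,n}⋯) + e_{2,n}) + e_{1,n} − z_n ). Then z_{n+1} − z_n converges strongly to 0. -/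

import Mathlib

/-! An operator `T` is `α`-averaged exactly when
`‖T x - T y‖² + (1 - α) / α * ‖(x - T x) - (y - T y)‖² ≤ ‖x - y‖²`, and such inequalities compose:
constants `s₁, s₂` give `s₁ s₂ / (s₁ + s₂)` for the composite. Hence `T₁ ∘ ⋯ ∘ T_m` is
`α`-averaged, `T₁ ∘ ⋯ ∘ T_m = (1 - α) Id + α R` with `R` nonexpansive, and since every `T_i` is
nonexpansive the scheme is an inexact Krasnosel'skiĭ–Mann iteration
`z_{n+1} = z_n + α λ_n (R z_n - z_n) + λ_n ε_n` with `‖ε_n‖ ≤ ∑_i ‖e_{i,n}‖`.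
For a fixed point `x` of `R`, `‖z_n - x‖` is quasi-Fejér, hence bounded, which makes
`∑ μ_n (1 - μ_n) ‖R z_n - z_n‖²` finite (`μ_n = α λ_n`). The residual `‖R z_n - z_n‖` is
nonincreasing up to summable errors, hence convergent, and the divergence of `∑ μ_n (1 - μ_n)`
forces its limit to be `0`; finally `‖z_{n+1} - z_n‖ ≤ ‖R z_n - z_n‖ + λ_n ‖ε_n‖`. -/

open Filter Topology
open scoped RealInnerProductSpace

variable {H : Type*} [NormedAddCommGroup H] [InnerProductSpace ℝ H] [CompleteSpace H]

/-- `T` is nonexpansive. -/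
def IsNonexpansiveOp (T : H → H) : Prop :=
  ∀ x y, ‖T x - T y‖ ≤ ‖x - y‖

/-- `T` is `α`-averaged: `T = (1 - α) • Id + α • R` for some nonexpansive `R`. -/
def IsAveragedOp (α : ℝ) (T : H → H) : Prop :=
  ∃ R : H → H, IsNonexpansiveOp R ∧ ∀ x, T x = (1 - α) • x + α • R x

/-- `z n` converges weakly to `w`. -/
def WeakLim (z : ℕ → H) (w : H) : Prop :=
  ∀ y : H, Tendsto (fun n => ⟪z n, y⟫) atTop (nhds ⟪w, y⟫)

/-- `compFrom T i k = T i ∘ T (i+1) ∘ ⋯ ∘ T (i+k-1)`; in particular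
`compFrom T 1 m = T 1 ∘ ⋯ ∘ T m` and `compFrom T i 0 = id`. -/
def compFrom (T : ℕ → H → H) : ℕ → ℕ → H → H
  | _, 0 => id
  | i, (k + 1) => T i ∘ compFrom T (i + 1) k

/-- Inexact composition with errors: `inexactFrom T e 1 m z =
T 1 (T 2 (⋯ T (m-1) (T m z + e m) + e (m-1) ⋯) + e 2) + e 1`. -/
def inexactFrom (T : ℕ → H → H) (e : ℕ → H) : ℕ → ℕ → H → H
  | _, 0 => id
  | i, (k + 1) => fun z => T i (inexactFrom T e (i + 1) k z) + e i


section RealSequences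

lemma exists_tendsto_of_le_add_of_summable {a c : ℕ → ℝ} {b : ℝ} (ha : ∀ n, b ≤ a n)
    (hc0 : ∀ n, 0 ≤ c n) (hc : Summable c) (hac : ∀ n, a (n + 1) ≤ a n + c n) :
    ∃ L, Tendsto a atTop (𝓝 L) := by
  set s : ℕ → ℝ := fun n => ∑ k ∈ Finset.range n, c k
  have hanti : Antitone fun n => a n - s n := by
    refine antitone_nat_of_succ_le fun n => ?_
    simp only [s, Finset.sum_range_succ]
    linarith [hac n]
  have hbdd : BddBelow (Set.range fun n => a n - s n) := by
    refine ⟨b - ∑' k, c k, ?_⟩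
    rintro _ ⟨n, rfl⟩
    linarith [ha n, hc.sum_le_tsum (Finset.range n) fun k _ => hc0 k]
  exact ⟨_, ((tendsto_atTop_ciInf hanti hbdd).add hc.hasSum.tendsto_sum_nat).congr
    fun n => sub_add_cancel _ _⟩

lemma summable_of_le_sub_add {u b c : ℕ → ℝ} (hu : ∀ n, 0 ≤ u n) (hb : ∀ n, 0 ≤ b n)
    (hc0 : ∀ n, 0 ≤ c n) (hc : Summable c) (h : ∀ n, u (n + 1) ≤ u n - b n + c n) :
    Summable b := by
  refine summable_of_sum_range_le (c := u 0 + ∑' k, c k) hb fun N => ?_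
  have hsum : ∑ n ∈ Finset.range N, b n ≤ ∑ n ∈ Finset.range N, ((u n - u (n + 1)) + c n) :=
    Finset.sum_le_sum fun n _ => by linarith [h n]
  rw [Finset.sum_add_distrib, Finset.sum_range_sub'] at hsum
  linarith [hu N, hc.sum_le_tsum (Finset.range N) fun k _ => hc0 k]

lemma summable_of_summable_mul_of_tendsto_pos {b g : ℕ → ℝ} {L : ℝ} (hb : ∀ n, 0 ≤ b n)
    (hg : Tendsto g atTop (𝓝 L)) (hL : 0 < L) (hbg : Summable fun n => b n * g n) :
    Summable b := by
  refine Summable.of_norm_bounded_eventually_nat (hbg.mul_left (2 / L)) ?_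
  filter_upwards [hg.eventually (lt_mem_nhds (half_lt_self hL))] with n hn
  calc ‖b n‖ = 2 / L * (b n * (L / 2)) := by rw [Real.norm_of_nonneg (hb n)]; field_simp
    _ ≤ 2 / L * (b n * g n) := by gcongr; exact hb n

end RealSequences

section NormedGroup

variable {E : Type*} [NormedAddCommGroup E]

def AveragedIneq (s : ℝ) (T : E → E) : Prop :=
  ∀ x y, ‖T x - T y‖ ^ 2 + s * ‖(x - T x) - (y - T y)‖ ^ 2 ≤ ‖x - y‖ ^ 2

lemma AveragedIneq.mono {s s' : ℝ} {T : E → E} (h : AveragedIneq s T) (hs : s' ≤ s) :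
    AveragedIneq s' T := fun x y =>
  (h x y).trans' (by gcongr)

lemma AveragedIneq.comp {s₁ s₂ : ℝ} {T₁ T₂ : E → E} (hs₁ : 0 < s₁) (hs₂ : 0 < s₂)
    (h₁ : AveragedIneq s₁ T₁) (h₂ : AveragedIneq s₂ T₂) :
    AveragedIneq (s₁ * s₂ / (s₁ + s₂)) (T₁ ∘ T₂) := by
  intro x y
  set u := x - y
  set v := T₂ x - T₂ y
  set w := T₁ (T₂ x) - T₁ (T₂ y)
  have hv : ‖v‖ ^ 2 + s₂ * ‖u - v‖ ^ 2 ≤ ‖u‖ ^ 2 := by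
    simpa only [show (x - T₂ x) - (y - T₂ y) = u - v by simp only [u, v]; abel] using h₂ x y
  have hw : ‖w‖ ^ 2 + s₁ * ‖v - w‖ ^ 2 ≤ ‖v‖ ^ 2 := by
    simpa only [show (T₂ x - T₁ (T₂ x)) - (T₂ y - T₁ (T₂ y)) = v - w by simp only [v, w]; abel]
      using h₁ (T₂ x) (T₂ y)
  have htri : ‖(x - T₁ (T₂ x)) - (y - T₁ (T₂ y))‖ ≤ ‖u - v‖ + ‖v - w‖ := by
    rw [show (x - T₁ (T₂ x)) - (y - T₁ (T₂ y)) = (u - v) + (v - w) by simp only [u, v, w]; abel]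
    exact norm_add_le _ _
  -- weighted Cauchy–Schwarz: `s₁ s₂ (p + q)² ≤ (s₁ + s₂)(s₂ p² + s₁ q²)`
  have hcs : s₁ * s₂ / (s₁ + s₂) * ‖(x - T₁ (T₂ x)) - (y - T₁ (T₂ y))‖ ^ 2
      ≤ s₂ * ‖u - v‖ ^ 2 + s₁ * ‖v - w‖ ^ 2 := by
    rw [div_mul_eq_mul_div, div_le_iff₀ (by positivity)]
    grw [htri]
    nlinarith [sq_nonneg (s₂ * ‖u - v‖ - s₁ * ‖v - w‖)]
  simp only [Function.comp_apply]
  linarith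

lemma averagedIneq_compFrom {σ : ℝ} (hσ : 0 < σ) {T : ℕ → E → E} {k : ℕ} (hk : 1 ≤ k) :
    ∀ i, (∀ j ∈ Finset.Ico i (i + k), AveragedIneq σ (T j)) →
      AveragedIneq (σ / k) (compFrom T i k) := by
  induction k, hk using Nat.le_induction with
  | base =>
    intro i hT
    simpa [compFrom] using hT i (by simp)
  | succ k hk ih =>
    intro i hT
    have hcomp := (hT i (by simp)).comp hσ (by positivity)
      (ih (i + 1) fun j hj => hT j (by simp at hj ⊢; omega))
    have hσk : σ * (σ / k) / (σ + σ / k) = σ / (k + 1) := by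
      field_simp
    rw [hσk] at hcomp
    exact_mod_cast hcomp

lemma norm_inexactFrom_sub_compFrom_le (T : ℕ → E → E) (e : ℕ → E) (k : ℕ) :
    ∀ i, (∀ j ∈ Finset.Ico i (i + k), IsNonexpansiveOp (T j)) → ∀ x,
      ‖inexactFrom T e i k x - compFrom T i k x‖ ≤ ∑ j ∈ Finset.Ico i (i + k), ‖e j‖ := by
  induction k with
  | zero => intro i _ x; simp [inexactFrom, compFrom]
  | succ k ih =>
    intro i hT x
    have hTi : IsNonexpansiveOp (T i) := hT i (by simp)
    have ih' := ih (i + 1) (fun j hj => hT j (by simp at hj ⊢; omega)) x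
    rw [Finset.sum_eq_sum_Ico_succ_bot (by omega), show i + (k + 1) = i + 1 + k by omega]
    calc ‖inexactFrom T e i (k + 1) x - compFrom T i (k + 1) x‖
        = ‖(T i (inexactFrom T e (i + 1) k x) - T i (compFrom T (i + 1) k x)) + e i‖ := by
          simp only [inexactFrom, compFrom, Function.comp_apply]; abel_nf
      _ ≤ ‖inexactFrom T e (i + 1) k x - compFrom T (i + 1) k x‖ + ‖e i‖ :=
          (norm_add_le _ _).trans (by gcongr; exact hTi _ _)
      _ ≤ ‖e i‖ + ∑ j ∈ Finset.Ico (i + 1) (i + 1 + k), ‖e j‖ := by linarith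

lemma norm_residual_km_step_le [NormedSpace ℝ E] {R : E → E} (hR : IsNonexpansiveOp R)
    {μ : ℝ} (hμ : μ ∈ Set.Icc (0 : ℝ) 1) (z c : E) :
    ‖R (z + μ • (R z - z) + c) - (z + μ • (R z - z) + c)‖ ≤ ‖R z - z‖ + 2 * ‖c‖ := by
  set z' := z + μ • (R z - z) + c
  have hstep : ‖z' - z‖ ≤ μ * ‖R z - z‖ + ‖c‖ := by
    calc ‖z' - z‖ = ‖μ • (R z - z) + c‖ := by congr 1; simp only [z']; abel
      _ ≤ μ * ‖R z - z‖ + ‖c‖ := by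
        grw [norm_add_le, norm_smul, Real.norm_of_nonneg hμ.1]
  have hrest : ‖R z - z'‖ ≤ (1 - μ) * ‖R z - z‖ + ‖c‖ := by
    calc ‖R z - z'‖ = ‖(1 - μ) • (R z - z) - c‖ := by congr 1; simp only [z']; module
      _ ≤ (1 - μ) * ‖R z - z‖ + ‖c‖ := by
        grw [norm_sub_le, norm_smul, Real.norm_of_nonneg (sub_nonneg.mpr hμ.2)]
  calc ‖R z' - z'‖ ≤ ‖R z' - R z‖ + ‖R z - z'‖ := norm_sub_le_norm_sub_add_norm_sub _ _ _
    _ ≤ ‖z' - z‖ + ‖R z - z'‖ := by grw [hR z' z]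
    _ ≤ ‖R z - z‖ + 2 * ‖c‖ := by linarith

end NormedGroup

section InnerProductSpace

variable {E : Type*} [NormedAddCommGroup E] [InnerProductSpace ℝ E]

lemma norm_sq_one_sub_smul_add_smul (t : ℝ) (a b : E) :
    ‖(1 - t) • a + t • b‖ ^ 2 = (1 - t) * ‖a‖ ^ 2 + t * ‖b‖ ^ 2 - t * (1 - t) * ‖a - b‖ ^ 2 := by
  simp only [← real_inner_self_eq_norm_sq, inner_add_left, inner_add_right, inner_sub_left,
    inner_sub_right, real_inner_smul_left, real_inner_smul_right, real_inner_comm b a]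
  ring

lemma norm_sq_one_sub_smul_add_smul_le {t : ℝ} (ht : t ∈ Set.Icc (0 : ℝ) 1) {a b : E}
    (hba : ‖b‖ ≤ ‖a‖) :
    ‖(1 - t) • a + t • b‖ ^ 2 ≤ ‖a‖ ^ 2 - t * (1 - t) * ‖a - b‖ ^ 2 := by
  rw [norm_sq_one_sub_smul_add_smul]
  nlinarith [ht.1, ht.2, pow_le_pow_left₀ (norm_nonneg b) hba 2]

lemma norm_sq_add_averagedIneq_eq {α : ℝ} {T R : E → E}
    (hTR : ∀ x, T x = (1 - α) • x + α • R x) (x y : E) :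
    ‖T x - T y‖ ^ 2 + (1 - α) / α * ‖(x - T x) - (y - T y)‖ ^ 2
      = (1 - α) * ‖x - y‖ ^ 2 + α * ‖R x - R y‖ ^ 2 := by
  have hT : T x - T y = (1 - α) • (x - y) + α • (R x - R y) := by rw [hTR x, hTR y]; module
  have hId : (x - T x) - (y - T y) = α • ((x - y) - (R x - R y)) := by
    rw [hTR x, hTR y]; module
  rw [hT, hId, norm_sq_one_sub_smul_add_smul, norm_smul, mul_pow, Real.norm_eq_abs, sq_abs]
  field_simp
  ring

lemma isAveragedOp_iff_averagedIneq {α : ℝ} (hα : 0 < α) {T : E → E} :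
    IsAveragedOp α T ↔ AveragedIneq ((1 - α) / α) T := by
  constructor
  · rintro ⟨R, hR, hTR⟩ x y
    rw [norm_sq_add_averagedIneq_eq hTR]
    nlinarith [pow_le_pow_left₀ (norm_nonneg _) (hR x y) 2]
  · intro h
    have hTR : ∀ x, T x = (1 - α) • x + α • (x + α⁻¹ • (T x - x)) := fun x => by
      rw [smul_add, smul_smul, mul_inv_cancel₀ hα.ne']; module
    refine ⟨_, fun x y => ?_, hTR⟩
    have hxy := h x y
    rw [norm_sq_add_averagedIneq_eq hTR] at hxy
    exact (pow_le_pow_iff_left₀ (norm_nonneg _) (norm_nonneg _) two_ne_zero).mp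
      (le_of_mul_le_mul_left (by linarith) hα)

lemma isAveragedOp_compFrom {T : ℕ → E → E} {αi : ℕ → ℝ} {M : ℝ} {i k : ℕ} (hk : 1 ≤ k)
    (hM : M < 1) (hpos : ∀ j ∈ Finset.Ico i (i + k), 0 < αi j)
    (hle : ∀ j ∈ Finset.Ico i (i + k), αi j ≤ M)
    (hT : ∀ j ∈ Finset.Ico i (i + k), IsAveragedOp (αi j) (T j)) :
    IsAveragedOp (k * M / (1 + (k - 1) * M)) (compFrom T i k) := by
  have hi : i ∈ Finset.Ico i (i + k) := by simp; omega
  have hM0 : 0 < M := (hpos i hi).trans_le (hle i hi)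
  have hk' : (1 : ℝ) ≤ k := by exact_mod_cast hk
  have hden : 0 < 1 + ((k : ℝ) - 1) * M := by nlinarith
  rw [isAveragedOp_iff_averagedIneq (by positivity)]
  have hσ : (1 - M) / M / k
      = (1 - k * M / (1 + (k - 1) * M)) / (k * M / (1 + (k - 1) * M)) := by
    rw [one_sub_div hden.ne', div_div_div_cancel_right₀ hden.ne', div_div]
    ring
  rw [← hσ]
  refine averagedIneq_compFrom (div_pos (by linarith) hM0) hk i fun j hj => ?_
  refine ((isAveragedOp_iff_averagedIneq (hpos j hj)).mp (hT j hj)).mono ?_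
  rw [div_le_div_iff₀ hM0 (hpos j hj)]
  nlinarith [hle j hj]

lemma IsAveragedOp.isNonexpansiveOp {α : ℝ} {T : E → E} (hα : α ∈ Set.Icc (0 : ℝ) 1)
    (h : IsAveragedOp α T) : IsNonexpansiveOp T := by
  obtain ⟨R, hR, hTR⟩ := h
  intro x y
  calc ‖T x - T y‖ = ‖(1 - α) • (x - y) + α • (R x - R y)‖ := by
        rw [hTR x, hTR y]; congr 1; module
    _ ≤ (1 - α) * ‖x - y‖ + α * ‖R x - R y‖ := by
        grw [norm_add_le, norm_smul, norm_smul, Real.norm_of_nonneg hα.1,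
          Real.norm_of_nonneg (sub_nonneg.mpr hα.2)]
    _ ≤ ‖x - y‖ := by nlinarith [hR x y, hα.1, hα.2]

lemma apply_eq_self_of_averaged {α : ℝ} (hα : α ≠ 0) {T R : E → E}
    (hTR : ∀ x, T x = (1 - α) • x + α • R x) {x : E} (hx : T x = x) : R x = x := by
  have hTx := hTR x
  rw [hx] at hTx
  have h : α • (R x - x) = 0 := by linear_combination (norm := module) -hTx
  exact sub_eq_zero.mp ((smul_eq_zero.mp h).resolve_left hα)

lemma norm_sq_km_step_sub_le {R : E → E} (hR : IsNonexpansiveOp R) {x : E} (hx : R x = x)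
    {μ : ℝ} (hμ : μ ∈ Set.Icc (0 : ℝ) 1) (z : E) :
    ‖z + μ • (R z - z) - x‖ ^ 2 ≤ ‖z - x‖ ^ 2 - μ * (1 - μ) * ‖R z - z‖ ^ 2 := by
  have hRz : ‖R z - x‖ ≤ ‖z - x‖ := by simpa only [hx] using hR z x
  have h := norm_sq_one_sub_smul_add_smul_le hμ hRz
  rwa [show (1 - μ) • (z - x) + μ • (R z - x) = z + μ • (R z - z) - x by module,
    show (z - x) - (R z - x) = -(R z - z) by abel, norm_neg] at h

lemma summable_mul_sq_norm_residual_inexactKM {R : E → E} (hR : IsNonexpansiveOp R) {x : E}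
    (hx : R x = x) {μ : ℕ → ℝ} (hμ : ∀ n, μ n ∈ Set.Icc (0 : ℝ) 1) {c : ℕ → E}
    (hc : Summable fun n => ‖c n‖) {z : ℕ → E}
    (hz : ∀ n, z (n + 1) = z n + μ n • (R (z n) - z n) + c n) :
    Summable fun n => μ n * (1 - μ n) * ‖R (z n) - z n‖ ^ 2 := by
  set w : ℕ → E := fun n => z n + μ n • (R (z n) - z n)
  have hB : ∀ n, 0 ≤ μ n * (1 - μ n) := fun n => mul_nonneg (hμ n).1 (sub_nonneg.mpr (hμ n).2)
  have hfejer n : ‖w n - x‖ ^ 2 ≤ ‖z n - x‖ ^ 2 - μ n * (1 - μ n) * ‖R (z n) - z n‖ ^ 2 :=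
    norm_sq_km_step_sub_le hR hx (hμ n) (z n)
  have hw : ∀ n, ‖w n - x‖ ≤ ‖z n - x‖ := fun n =>
    (pow_le_pow_iff_left₀ (norm_nonneg _) (norm_nonneg _) two_ne_zero).mp
      ((hfejer n).trans (sub_le_self _ (mul_nonneg (hB n) (sq_nonneg _))))
  have hz' : ∀ n, ‖z (n + 1) - x‖ ≤ ‖w n - x‖ + ‖c n‖ := fun n => by
    rw [hz n, show z n + μ n • (R (z n) - z n) + c n - x
      = (z n + μ n • (R (z n) - z n) - x) + c n by abel]
    exact norm_add_le _ _
  obtain ⟨_, hlim⟩ := exists_tendsto_of_le_add_of_summable (fun n => norm_nonneg (z n - x))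
    (fun n => norm_nonneg (c n)) hc fun n => (hz' n).trans (by linarith [hw n])
  obtain ⟨K, hK⟩ := hlim.bddAbove_range
  have hK' : ∀ n, ‖z n - x‖ ≤ K := fun n => hK ⟨n, rfl⟩
  have hK0 : 0 ≤ K := (norm_nonneg _).trans (hK' 0)
  refine summable_of_le_sub_add (u := fun n => ‖z n - x‖ ^ 2) (c := fun n => 2 * K * ‖c n‖)
    (fun n => sq_nonneg _) (fun n => mul_nonneg (hB n) (sq_nonneg _)) (fun n => by positivity)
    (hc.mul_left _) fun n => ?_
  -- `‖z (n+1) - x‖² - ‖w n - x‖²` is a difference (at most `‖c n‖`) times a sum (at most `2K`)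
  have hdiff := mul_nonneg (sub_nonneg.mpr (hz' n))
    (add_nonneg (norm_nonneg (z (n + 1) - x)) (norm_nonneg (w n - x)))
  have hsum := mul_le_mul_of_nonneg_left (add_le_add (hK' (n + 1)) ((hw n).trans (hK' n)))
    (norm_nonneg (c n))
  nlinarith [hfejer n]

lemma tendsto_norm_residual_inexactKM {R : E → E} (hR : IsNonexpansiveOp R) {x : E}
    (hx : R x = x) {μ : ℕ → ℝ} (hμ : ∀ n, μ n ∈ Set.Icc (0 : ℝ) 1)
    (hμdiv : ¬ Summable fun n => μ n * (1 - μ n)) {c : ℕ → E}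
    (hc : Summable fun n => ‖c n‖) {z : ℕ → E}
    (hz : ∀ n, z (n + 1) = z n + μ n • (R (z n) - z n) + c n) :
    Tendsto (fun n => ‖R (z n) - z n‖) atTop (𝓝 0) := by
  have hstep : ∀ n, ‖R (z (n + 1)) - z (n + 1)‖ ≤ ‖R (z n) - z n‖ + 2 * ‖c n‖ := fun n => by
    rw [hz n]; exact norm_residual_km_step_le hR (hμ n) (z n) (c n)
  obtain ⟨L, hL⟩ := exists_tendsto_of_le_add_of_summable
    (a := fun n => ‖R (z n) - z n‖) (fun n => norm_nonneg _)
    (fun n => by positivity) (hc.mul_left 2) hstep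
  obtain rfl : L = 0 := by
    refine (eq_of_le_of_not_lt (ge_of_tendsto' hL fun n => norm_nonneg _) fun hL0 => ?_).symm
    exact hμdiv <| summable_of_summable_mul_of_tendsto_pos
      (fun n => mul_nonneg (hμ n).1 (sub_nonneg.mpr (hμ n).2)) (hL.pow 2) (by positivity)
      (summable_mul_sq_norm_residual_inexactKM hR hx hμ hc hz)
  exact hL

lemma tendsto_succ_sub_inexactKM {R : E → E} (hR : IsNonexpansiveOp R) {x : E}
    (hx : R x = x) {μ : ℕ → ℝ} (hμ : ∀ n, μ n ∈ Set.Icc (0 : ℝ) 1)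
    (hμdiv : ¬ Summable fun n => μ n * (1 - μ n)) {c : ℕ → E}
    (hc : Summable fun n => ‖c n‖) {z : ℕ → E}
    (hz : ∀ n, z (n + 1) = z n + μ n • (R (z n) - z n) + c n) :
    Tendsto (fun n => z (n + 1) - z n) atTop (𝓝 0) := by
  rw [tendsto_zero_iff_norm_tendsto_zero]
  refine squeeze_zero (fun n => norm_nonneg _) (fun n => ?_) (by
    simpa using (tendsto_norm_residual_inexactKM hR hx hμ hμdiv hc hz).add hc.tendsto_atTop_zero)
  rw [hz n, show z n + μ n • (R (z n) - z n) + c n - z n = μ n • (R (z n) - z n) + c n by abel]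
  grw [norm_add_le, norm_smul, Real.norm_of_nonneg (hμ n).1,
    mul_le_of_le_one_left (norm_nonneg _) (hμ n).2]

end InnerProductSpace

theorem statement3
    (m : ℕ) (hm : 1 ≤ m)
    (αi : ℕ → ℝ) (T : ℕ → H → H) (e : ℕ → ℕ → H)
    (hαi : ∀ i ∈ Finset.Icc 1 m, αi i ∈ Set.Ioo (0 : ℝ) 1)
    (hT : ∀ i ∈ Finset.Icc 1 m, IsAveragedOp (αi i) (T i))
    (M α : ℝ)
    (hM1 : ∀ i ∈ Finset.Icc 1 m, αi i ≤ M)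
    (hM2 : ∃ i ∈ Finset.Icc 1 m, αi i = M)
    (hα : α = (m : ℝ) * M / (1 + ((m : ℝ) - 1) * M))
    (lam : ℕ → ℝ) (hlam : ∀ n, lam n ∈ Set.Ioo (0 : ℝ) (1 / α))
    (hfix : ∃ x : H, compFrom T 1 m x = x)
    (hdiv : ¬ Summable (fun n => lam n * (1 - α * lam n)))
    (herr : ∀ i ∈ Finset.Icc 1 m, Summable (fun n => lam n * ‖e i n‖))
    (z : ℕ → H)
    (hz : ∀ n, z (n + 1) = z n + lam n • (inexactFrom T (fun i => e i n) 1 m (z n) - z n)) :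
    Tendsto (fun n => z (n + 1) - z n) atTop (nhds 0) := by
  obtain ⟨i₀, hi₀, rfl⟩ := hM2
  have hIcc : Finset.Icc 1 m = Finset.Ico 1 (1 + m) := by ext; simp; omega
  rw [hIcc] at hαi hT hM1 hi₀ herr
  have hα0 : 0 < α := one_div_pos.mp ((hlam 0).1.trans (hlam 0).2)
  obtain ⟨R, hR, hSR⟩ := hα ▸ isAveragedOp_compFrom hm (hαi i₀ hi₀).2
    (fun j hj => (hαi j hj).1) hM1 hT
  obtain ⟨x, hx⟩ := hfix
  set ε : ℕ → H := fun n => inexactFrom T (fun i => e i n) 1 m (z n) - compFrom T 1 m (z n)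
  have hε n : ‖ε n‖ ≤ ∑ i ∈ Finset.Ico 1 (1 + m), ‖e i n‖ :=
    norm_inexactFrom_sub_compFrom_le T _ m 1
      (fun j hj => (hT j hj).isNonexpansiveOp (Set.Ioo_subset_Icc_self (hαi j hj))) (z n)
  have hμ n : α * lam n ∈ Set.Icc (0 : ℝ) 1 :=
    ⟨(mul_pos hα0 (hlam n).1).le, ((lt_div_iff₀' hα0).mp (one_div α ▸ (hlam n).2)).le⟩
  refine tendsto_succ_sub_inexactKM hR (apply_eq_self_of_averaged hα0.ne' hSR hx) hμ ?_
    (c := fun n => lam n • ε n) ?_ fun n => ?_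
  · simpa only [mul_assoc, summable_mul_left_iff hα0.ne'] using hdiv
  · refine (summable_sum herr).of_nonneg_of_le (fun n => norm_nonneg _) fun n => ?_
    rw [norm_smul, Real.norm_of_nonneg (hlam n).1.le, ← Finset.mul_sum]
    exact mul_le_mul_of_nonneg_left (hε n) (hlam n).1.le
  · simp only [hz n, ε, hSR]
    module
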